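/- Let M ∈ ℂ^{n₁×n₂} with tangent space T_M at its rank-r SVD, and suppose: (i) γ‖Z‖₂ ≤ ‖A(Z)‖₂ for all Z ∈ T_M with γ > 0; (ii) there exists z ∈ ℂ^m with Y = A*z satisfying α₁ = ‖UV* - P_{T_M}Y‖₂ and α₂ = ‖P_{T_M^⊥}Y‖ < 1; (iii) α₁‖A‖ < (1-α₂)γ. Then for every M̂: ‖M̂ - M‖₂ ≤ (γ + ‖A‖)/((1-α₂)γ - α₁‖A‖) · [‖M̂‖₁ - ‖M‖₁ + ((α₁ + 1 - α₂)/(γ + ‖A‖) + ‖z‖₂)·‖A(M̂ - M)‖₂]. -/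

import Mathlib

/-!
Write `H = M̂ - M = P_T H + P_⊥ H`. The matrix `U Vᴴ + polar(P_⊥ H)` is a subgradient of the
nuclear norm at `M`, so `‖M̂‖₁ - ‖M‖₁ ≥ Re ⟨U Vᴴ, H⟩ + ‖P_⊥ H‖₁`. Replacing `U Vᴴ` by the
certificate `Y = A* z` costs `α₁ ‖P_T H‖₂`; what remains is `⟨Y, H⟩ = ⟨z, A H⟩` and
`⟨P_⊥ Y, P_⊥ H⟩ ≤ α₂ ‖P_⊥ H‖₁` (von Neumann's trace inequality). Together with
`γ ‖P_T H‖₂ ≤ ‖A H‖₂ + ‖A‖ ‖P_⊥ H‖₁` and `‖H‖₂ ≤ ‖P_T H‖₂ + ‖P_⊥ H‖₁`, eliminating the two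
unknowns `‖P_T H‖₂` and `‖P_⊥ H‖₁` gives the bound.
-/

open Matrix Finset

/-- singular values of a complex matrix, in decreasing order -/
noncomputable def singVals {n₁ n₂ : ℕ} (M : Matrix (Fin n₁) (Fin n₂) ℂ) :
    Fin n₂ → ℝ :=
  let f : Fin n₂ → ℝ :=
    fun j => Real.sqrt ((Matrix.isHermitian_conjTranspose_mul_self M).eigenvalues j)
  fun j => (f ∘ Tuple.sort f) (Fin.rev j)

/-- nuclear norm -/
noncomputable def nucNorm {n₁ n₂ : ℕ} (M : Matrix (Fin n₁) (Fin n₂) ℂ) : ℝ :=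
  ∑ j, singVals M j

/-- Frobenius norm -/
noncomputable def frobNorm {n₁ n₂ : ℕ} (M : Matrix (Fin n₁) (Fin n₂) ℂ) : ℝ :=
  Real.sqrt (∑ i, ∑ j, ‖M i j‖ ^ 2)

noncomputable def l2norm {m : ℕ} (x : Fin m → ℂ) : ℝ :=
  Real.sqrt (∑ i, ‖x i‖ ^ 2)

def tangentSpace {n₁ n₂ r : ℕ} (U : Matrix (Fin n₁) (Fin r) ℂ)
    (V : Matrix (Fin n₂) (Fin r) ℂ) : Set (Matrix (Fin n₁) (Fin n₂) ℂ) :=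
  {Z | ∃ (B₁ : Matrix (Fin n₂) (Fin r) ℂ) (B₂ : Matrix (Fin n₁) (Fin r) ℂ),
    Z = U * B₁ᴴ + B₂ * Vᴴ}

/-- orthogonal projection onto the tangent space -/
noncomputable def projT {n₁ n₂ r : ℕ} (U : Matrix (Fin n₁) (Fin r) ℂ)
    (V : Matrix (Fin n₂) (Fin r) ℂ) (Z : Matrix (Fin n₁) (Fin n₂) ℂ) :
    Matrix (Fin n₁) (Fin n₂) ℂ :=
  U * Uᴴ * Z + Z * (V * Vᴴ) - U * Uᴴ * Z * (V * Vᴴ)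


section Euclidean
variable {m n₁ n₂ : ℕ}

noncomputable def frobEquiv : Matrix (Fin n₁) (Fin n₂) ℂ ≃ₗ[ℂ] EuclideanSpace ℂ (Fin n₁ × Fin n₂) :=
  (Matrix.ofLinearEquiv ℂ).symm ≪≫ₗ (LinearEquiv.curry ℂ ℂ _ _).symm ≪≫ₗ
    (WithLp.linearEquiv 2 ℂ _).symm

lemma frobEquiv_apply (X : Matrix (Fin n₁) (Fin n₂) ℂ) :
    frobEquiv X = WithLp.toLp 2 (fun p => X p.1 p.2) := rfl

lemma frobNorm_eq_norm (X : Matrix (Fin n₁) (Fin n₂) ℂ) : frobNorm X = ‖frobEquiv X‖ := by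
  rw [EuclideanSpace.norm_eq, frobNorm, Fintype.sum_prod_type]
  rfl

lemma trace_conjTranspose_mul_eq_inner (X Z : Matrix (Fin n₁) (Fin n₂) ℂ) :
    trace (Xᴴ * Z) = inner ℂ (frobEquiv X) (frobEquiv Z) := by
  simp only [trace, Matrix.diag, mul_apply, conjTranspose_apply, PiLp.inner_apply,
    frobEquiv_apply, Fintype.sum_prod_type, RCLike.inner_apply, mul_comm]
  exact Finset.sum_comm

lemma norm_trace_conjTranspose_mul_le (X Z : Matrix (Fin n₁) (Fin n₂) ℂ) :
    ‖trace (Xᴴ * Z)‖ ≤ frobNorm X * frobNorm Z := by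
  rw [trace_conjTranspose_mul_eq_inner, frobNorm_eq_norm, frobNorm_eq_norm]
  exact norm_inner_le_norm _ _

lemma frobNorm_sq (X : Matrix (Fin n₁) (Fin n₂) ℂ) : frobNorm X ^ 2 = (trace (Xᴴ * X)).re := by
  rw [trace_conjTranspose_mul_eq_inner, frobNorm_eq_norm]
  exact (inner_self_eq_norm_sq (𝕜 := ℂ) _).symm

lemma frobNorm_add_le (X Z : Matrix (Fin n₁) (Fin n₂) ℂ) :
    frobNorm (X + Z) ≤ frobNorm X + frobNorm Z := by
  simpa only [frobNorm_eq_norm, map_add] using norm_add_le (frobEquiv X) (frobEquiv Z)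

lemma l2norm_eq_norm (x : Fin m → ℂ) :
    l2norm x = ‖(WithLp.toLp 2 x : EuclideanSpace ℂ (Fin m))‖ := by
  rw [EuclideanSpace.norm_eq, l2norm]

lemma l2norm_nonneg (x : Fin m → ℂ) : 0 ≤ l2norm x := Real.sqrt_nonneg _

lemma l2norm_sub_le (x y : Fin m → ℂ) : l2norm (x - y) ≤ l2norm x + l2norm y := by
  simpa only [l2norm_eq_norm, WithLp.toLp_sub] using norm_sub_le (WithLp.toLp 2 x) (WithLp.toLp 2 y)

lemma norm_star_dotProduct_le (x y : Fin m → ℂ) : ‖star x ⬝ᵥ y‖ ≤ l2norm x * l2norm y := by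
  rw [l2norm_eq_norm, l2norm_eq_norm, dotProduct_comm, ← EuclideanSpace.inner_eq_star_dotProduct]
  exact norm_inner_le_norm _ _

lemma star_dotProduct_self (x : Fin m → ℂ) : star x ⬝ᵥ x = ((l2norm x ^ 2 : ℝ) : ℂ) := by
  rw [l2norm_eq_norm, dotProduct_comm, ← EuclideanSpace.inner_eq_star_dotProduct,
    inner_self_eq_norm_sq_to_K]
  push_cast; rfl

end Euclidean

section FrobOpNorm
variable {m n₁ n₂ : ℕ}

noncomputable def frobOpNorm (A : Matrix (Fin n₁) (Fin n₂) ℂ →ₗ[ℂ] (Fin m → ℂ)) : ℝ :=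
  sSup {t : ℝ | ∃ Z : Matrix (Fin n₁) (Fin n₂) ℂ, frobNorm Z ≤ 1 ∧ t = l2norm (A Z)}

variable (A : Matrix (Fin n₁) (Fin n₂) ℂ →ₗ[ℂ] (Fin m → ℂ))

noncomputable def frobL2CLM : EuclideanSpace ℂ (Fin n₁ × Fin n₂) →L[ℂ] EuclideanSpace ℂ (Fin m) :=
  LinearMap.toContinuousLinearMap
    ((WithLp.linearEquiv 2 ℂ _).symm.toLinearMap ∘ₗ A ∘ₗ frobEquiv.symm.toLinearMap)

lemma frobOpNorm_eq_norm : frobOpNorm A = ‖frobL2CLM A‖ := by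
  rw [← ContinuousLinearMap.sSup_unitClosedBall_eq_norm, frobOpNorm]
  congr 1
  ext t
  constructor
  · rintro ⟨Z, hZ, rfl⟩
    refine ⟨frobEquiv Z, by simpa [frobNorm_eq_norm] using hZ, ?_⟩
    simp [frobL2CLM, l2norm_eq_norm]
  · rintro ⟨x, hx, rfl⟩
    refine ⟨frobEquiv.symm x, by simpa [frobNorm_eq_norm] using hx, ?_⟩
    simp [frobL2CLM, l2norm_eq_norm]

lemma frobOpNorm_nonneg : 0 ≤ frobOpNorm A := by
  rw [frobOpNorm_eq_norm]; exact norm_nonneg _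

lemma l2norm_apply_le_frobOpNorm (Z : Matrix (Fin n₁) (Fin n₂) ℂ) :
    l2norm (A Z) ≤ frobOpNorm A * frobNorm Z := by
  have := (frobL2CLM A).le_opNorm (frobEquiv Z)
  simpa [frobOpNorm_eq_norm, frobNorm_eq_norm, frobL2CLM, l2norm_eq_norm] using this

end FrobOpNorm

section MatrixVector
variable {k n₁ n₂ : ℕ}

lemma conjTranspose_mul_apply_self (X Y : Matrix (Fin k) (Fin n₂) ℂ) (j : Fin n₂) :
    (Xᴴ * Y) j j = star (fun i => X i j) ⬝ᵥ fun i => Y i j := by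
  simp only [mul_apply, dotProduct, conjTranspose_apply, Pi.star_apply]

lemma col_mul_eq_mulVec (G : Matrix (Fin n₁) (Fin n₂) ℂ) (W : Matrix (Fin n₂) (Fin k) ℂ)
    (j : Fin k) :
    (fun i => (G * W) i j) = G *ᵥ fun i => W i j := rfl

lemma l2norm_col_of_conjTranspose_mul_self_eq_one {V : Matrix (Fin n₁) (Fin n₂) ℂ}
    (hV : Vᴴ * V = 1) (j : Fin n₂) : l2norm (fun i => V i j) = 1 := by
  have h := conjTranspose_mul_apply_self V V j
  rw [hV, one_apply_eq, star_dotProduct_self] at h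
  have h2 : l2norm (fun i => V i j) ^ 2 = 1 := by exact_mod_cast h.symm
  nlinarith [l2norm_nonneg (fun i => V i j)]

lemma l2norm_mulVec_sq (G : Matrix (Fin n₁) (Fin n₂) ℂ) (v : Fin n₂ → ℂ) :
    ((l2norm (G *ᵥ v) ^ 2 : ℝ) : ℂ) = star v ⬝ᵥ ((Gᴴ * G) *ᵥ v) := by
  rw [← star_dotProduct_self, star_mulVec, ← dotProduct_mulVec, mulVec_mulVec]

lemma l2norm_mulVec_le_of_isIdempotentElem {G : Matrix (Fin n₁) (Fin n₂) ℂ}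
    (hG : IsIdempotentElem (Gᴴ * G)) (v : Fin n₂ → ℂ) : l2norm (G *ᵥ v) ≤ l2norm v := by
  set Q := Gᴴ * G
  have hQ : Qᴴ * Q = Q := by
    rw [show Qᴴ = Q from (isHermitian_conjTranspose_mul_self G).eq]; exact hG
  -- `‖G v‖² = ⟪v, Q v⟫ = ‖Q v‖²`, and Cauchy–Schwarz bounds `⟪v, Q v⟫` by `‖v‖ ‖Q v‖`
  have hGQ : l2norm (G *ᵥ v) = l2norm (Q *ᵥ v) := by
    have hQv := l2norm_mulVec_sq Q v
    rw [hQ] at hQv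
    have h := (l2norm_mulVec_sq G v).trans hQv.symm
    have h2 : l2norm (G *ᵥ v) ^ 2 = l2norm (Q *ᵥ v) ^ 2 := by exact_mod_cast h
    exact (pow_left_inj₀ (l2norm_nonneg _) (l2norm_nonneg _) two_ne_zero).1 h2
  have hCS : l2norm (Q *ᵥ v) ^ 2 ≤ l2norm v * l2norm (Q *ᵥ v) := by
    have h := l2norm_mulVec_sq G v
    rw [hGQ] at h
    have := norm_star_dotProduct_le v (Q *ᵥ v)
    rwa [← h, Complex.norm_real, Real.norm_of_nonneg (sq_nonneg _)] at this
  rw [hGQ]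
  nlinarith [l2norm_nonneg (Q *ᵥ v), l2norm_nonneg v]

end MatrixVector

section Gram
variable {n₁ n₂ : ℕ} (X : Matrix (Fin n₁) (Fin n₂) ℂ)

noncomputable def gramEigval : Fin n₂ → ℝ := (isHermitian_conjTranspose_mul_self X).eigenvalues

noncomputable def gramEigvec : Matrix (Fin n₂) (Fin n₂) ℂ :=
  (isHermitian_conjTranspose_mul_self X).eigenvectorUnitary

/-- `f (Xᴴ X)`, by functional calculus in the eigenbasis of `Xᴴ X`. -/
noncomputable def gramFun (f : ℝ → ℝ) : Matrix (Fin n₂) (Fin n₂) ℂ :=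
  gramEigvec X * diagonal (fun j => (f (gramEigval X j) : ℂ)) * (gramEigvec X)ᴴ

lemma gramEigval_nonneg (j : Fin n₂) : 0 ≤ gramEigval X j :=
  eigenvalues_conjTranspose_mul_self_nonneg X j

lemma gramEigvec_mul_conjTranspose : gramEigvec X * (gramEigvec X)ᴴ = 1 :=
  Unitary.coe_mul_star_self _

lemma conjTranspose_gramEigvec_mul : (gramEigvec X)ᴴ * gramEigvec X = 1 :=
  Unitary.coe_star_mul_self _

lemma gramFun_id : gramFun X id = Xᴴ * X :=
  ((isHermitian_conjTranspose_mul_self X).spectral_theorem).symm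

lemma gramFun_mul (f g : ℝ → ℝ) : gramFun X f * gramFun X g = gramFun X (fun x => f x * g x) := by
  simp only [gramFun, Matrix.mul_assoc]
  rw [← Matrix.mul_assoc (gramEigvec X)ᴴ, conjTranspose_gramEigvec_mul, Matrix.one_mul,
    ← Matrix.mul_assoc (diagonal _), diagonal_mul_diagonal]
  push_cast; rfl

lemma gramFun_congr {f g : ℝ → ℝ} (h : ∀ x, 0 ≤ x → f x = g x) : gramFun X f = gramFun X g := by
  simp only [gramFun, h _ (gramEigval_nonneg X _)]

lemma conjTranspose_gramFun (f : ℝ → ℝ) : (gramFun X f)ᴴ = gramFun X f := by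
  simp [gramFun, Matrix.mul_assoc, Pi.star_def]

lemma trace_gramFun (f : ℝ → ℝ) : trace (gramFun X f) = ∑ j, (f (gramEigval X j) : ℂ) := by
  rw [gramFun, trace_mul_cycle, conjTranspose_gramEigvec_mul, Matrix.one_mul, trace_diagonal]

lemma star_dotProduct_gramFun_mulVec (f : ℝ → ℝ) (v : Fin n₂ → ℂ) :
    star v ⬝ᵥ (gramFun X f *ᵥ v) =
      ((∑ j, f (gramEigval X j) * ‖((gramEigvec X)ᴴ *ᵥ v) j‖ ^ 2 : ℝ) : ℂ) := by
  set c := (gramEigvec X)ᴴ *ᵥ v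
  have hc : star v ᵥ* gramEigvec X = star c := by
    rw [star_mulVec, conjTranspose_conjTranspose]
  rw [gramFun, ← mulVec_mulVec, ← mulVec_mulVec, dotProduct_mulVec, hc, Complex.ofReal_sum]
  simp only [dotProduct, mulVec_diagonal, Pi.star_apply]
  refine Finset.sum_congr rfl fun j _ => ?_
  rw [Complex.ofReal_mul, Complex.ofReal_pow, ← Complex.conj_mul', RCLike.star_def]
  ring

lemma conjTranspose_mul_gramEigvec_mul_self :
    (X * gramEigvec X)ᴴ * (X * gramEigvec X) = diagonal (fun j => (gramEigval X j : ℂ)) := by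
  rw [conjTranspose_mul, Matrix.mul_assoc, ← Matrix.mul_assoc Xᴴ, ← gramFun_id, gramFun]
  simp only [← Matrix.mul_assoc, conjTranspose_gramEigvec_mul, Matrix.one_mul]
  rw [Matrix.mul_assoc, conjTranspose_gramEigvec_mul, Matrix.mul_one]
  rfl

end Gram

section SingularValues
variable {n₁ n₂ : ℕ}

lemma nucNorm_eq_sum_sqrt_gramEigval (X : Matrix (Fin n₁) (Fin n₂) ℂ) :
    nucNorm X = ∑ j, √(gramEigval X j) := by
  rw [nucNorm, singVals]
  exact (Equiv.sum_comp (Fin.revPerm.trans (Tuple.sort _)) (fun j => √(gramEigval X j)))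

lemma sqrt_gramEigval_le_singVals_zero (h : 0 < n₂) (X : Matrix (Fin n₁) (Fin n₂) ℂ)
    (j : Fin n₂) : √(gramEigval X j) ≤ singVals X ⟨0, h⟩ := by
  set f : Fin n₂ → ℝ := fun j => √(gramEigval X j)
  -- `singVals X ⟨0, h⟩` is the sorted sequence at the last index
  have hj : f j = (f ∘ Tuple.sort f) ((Tuple.sort f)⁻¹ j) := by simp
  show f j ≤ (f ∘ Tuple.sort f) (Fin.rev ⟨0, h⟩)
  rw [hj]
  exact Tuple.monotone_sort f (Fin.le_def.2 (by simp [Fin.rev]; omega))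

lemma frobNorm_sq_eq_sum_gramEigval (X : Matrix (Fin n₁) (Fin n₂) ℂ) :
    frobNorm X ^ 2 = ∑ j, gramEigval X j := by
  rw [frobNorm_sq, ← gramFun_id, trace_gramFun, ← Complex.ofReal_sum, Complex.ofReal_re]
  rfl

lemma nucNorm_nonneg (X : Matrix (Fin n₁) (Fin n₂) ℂ) : 0 ≤ nucNorm X := by
  rw [nucNorm_eq_sum_sqrt_gramEigval]; positivity

lemma frobNorm_le_nucNorm (X : Matrix (Fin n₁) (Fin n₂) ℂ) : frobNorm X ≤ nucNorm X := by
  have h : frobNorm X ^ 2 ≤ nucNorm X ^ 2 := by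
    rw [frobNorm_sq_eq_sum_gramEigval, nucNorm_eq_sum_sqrt_gramEigval]
    calc ∑ j, gramEigval X j = ∑ j, √(gramEigval X j) ^ 2 :=
          Finset.sum_congr rfl fun j _ => (Real.sq_sqrt (gramEigval_nonneg X j)).symm
      _ ≤ (∑ j, √(gramEigval X j)) ^ 2 :=
          Finset.sum_sq_le_sq_sum_of_nonneg fun j _ => Real.sqrt_nonneg _
  exact (pow_le_pow_iff_left₀ (Real.sqrt_nonneg _) (nucNorm_nonneg X) two_ne_zero).1 h

lemma l2norm_mulVec_le_singVals_zero (h : 0 < n₂) (X : Matrix (Fin n₁) (Fin n₂) ℂ)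
    (v : Fin n₂ → ℂ) : l2norm (X *ᵥ v) ≤ singVals X ⟨0, h⟩ * l2norm v := by
  set σ := singVals X ⟨0, h⟩
  have hσ : 0 ≤ σ := Real.sqrt_nonneg _
  have hquad : ∀ f : ℝ → ℝ, (star v ⬝ᵥ (gramFun X f *ᵥ v)).re =
      ∑ j, f (gramEigval X j) * ‖((gramEigvec X)ᴴ *ᵥ v) j‖ ^ 2 := fun f => by
    rw [star_dotProduct_gramFun_mulVec, Complex.ofReal_re]
  have hv : l2norm v ^ 2 = ∑ j, 1 * ‖((gramEigvec X)ᴴ *ᵥ v) j‖ ^ 2 := by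
    rw [← hquad (fun _ => 1), show gramFun X (fun _ => 1) = 1 by
      simp [gramFun, gramEigvec_mul_conjTranspose], one_mulVec, star_dotProduct_self,
      Complex.ofReal_re]
  have hXv : l2norm (X *ᵥ v) ^ 2 = ∑ j, gramEigval X j * ‖((gramEigvec X)ᴴ *ᵥ v) j‖ ^ 2 := by
    have h := hquad id
    rwa [gramFun_id, ← l2norm_mulVec_sq, Complex.ofReal_re] at h
  have hsq : l2norm (X *ᵥ v) ^ 2 ≤ (σ * l2norm v) ^ 2 := by
    rw [mul_pow, hv, hXv, Finset.mul_sum]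
    refine Finset.sum_le_sum fun j _ => ?_
    have hev : gramEigval X j ≤ σ ^ 2 := by
      rw [← Real.sq_sqrt (gramEigval_nonneg X j)]
      exact pow_le_pow_left₀ (Real.sqrt_nonneg _) (sqrt_gramEigval_le_singVals_zero h X j) 2
    nlinarith [sq_nonneg ‖((gramEigvec X)ᴴ *ᵥ v) j‖]
  exact (pow_le_pow_iff_left₀ (l2norm_nonneg _) (mul_nonneg hσ (l2norm_nonneg v)) two_ne_zero).1 hsq

lemma norm_trace_conjTranspose_mul_le_mul_nucNorm {G : Matrix (Fin n₁) (Fin n₂) ℂ} {s : ℝ}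
    (hG : ∀ v, l2norm (G *ᵥ v) ≤ s * l2norm v) (X : Matrix (Fin n₁) (Fin n₂) ℂ) :
    ‖trace (Gᴴ * X)‖ ≤ s * nucNorm X := by
  set W := gramEigvec X
  have htr : trace (Gᴴ * X) = ∑ j, star (G *ᵥ fun i => W i j) ⬝ᵥ fun i => (X * W) i j := by
    rw [show Gᴴ * X = Gᴴ * (X * W) * Wᴴ by
      rw [Matrix.mul_assoc, Matrix.mul_assoc, gramEigvec_mul_conjTranspose, Matrix.mul_one],
      trace_mul_cycle, ← conjTranspose_mul, trace]
    exact Finset.sum_congr rfl fun j _ => by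
      rw [Matrix.diag, conjTranspose_mul_apply_self, col_mul_eq_mulVec]
  have hXW : ∀ j, l2norm (fun i => (X * W) i j) = √(gramEigval X j) := fun j => by
    have h := conjTranspose_mul_apply_self (X * W) (X * W) j
    rw [conjTranspose_mul_gramEigvec_mul_self, diagonal_apply_eq, star_dotProduct_self] at h
    rw [← Real.sqrt_sq (l2norm_nonneg _)]
    exact congrArg Real.sqrt (by exact_mod_cast h.symm)
  calc ‖trace (Gᴴ * X)‖
      ≤ ∑ j, l2norm (G *ᵥ fun i => W i j) * l2norm (fun i => (X * W) i j) := by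
        rw [htr]
        exact (norm_sum_le _ _).trans (Finset.sum_le_sum fun j _ => norm_star_dotProduct_le _ _)
    _ ≤ ∑ j, s * √(gramEigval X j) := by
        refine Finset.sum_le_sum fun j _ => ?_
        rw [hXW]
        refine mul_le_mul_of_nonneg_right ?_ (Real.sqrt_nonneg _)
        have := hG fun i => W i j
        rwa [l2norm_col_of_conjTranspose_mul_self_eq_one (conjTranspose_gramEigvec_mul X),
          mul_one] at this
    _ = s * nucNorm X := by rw [← Finset.mul_sum, nucNorm_eq_sum_sqrt_gramEigval]

end SingularValues

section Polar
variable {n₁ n₂ : ℕ} (X : Matrix (Fin n₁) (Fin n₂) ℂ)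

/-- The partial isometry `X (Xᴴ X)^{-1/2}` of the polar decomposition, using `0⁻¹ = 0` on the
kernel of `X`. -/
noncomputable def polarFactor : Matrix (Fin n₁) (Fin n₂) ℂ := X * gramFun X fun x => (√x)⁻¹

lemma conjTranspose_polarFactor_mul_self : (polarFactor X)ᴴ * X = gramFun X Real.sqrt := by
  rw [polarFactor, conjTranspose_mul, conjTranspose_gramFun, Matrix.mul_assoc, ← gramFun_id,
    gramFun_mul]
  refine gramFun_congr X fun x hx => ?_
  rcases hx.eq_or_lt with rfl | hx
  · simp
  · rw [id, ← Real.sq_sqrt hx.le, Real.sqrt_sq (Real.sqrt_nonneg x), pow_two, ← mul_assoc,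
      inv_mul_cancel₀ (Real.sqrt_pos.2 hx).ne', one_mul]

lemma trace_conjTranspose_polarFactor_mul_self : trace ((polarFactor X)ᴴ * X) = nucNorm X := by
  rw [conjTranspose_polarFactor_mul_self, trace_gramFun, nucNorm_eq_sum_sqrt_gramEigval,
    Complex.ofReal_sum]

lemma isIdempotentElem_conjTranspose_polarFactor_mul_self :
    IsIdempotentElem ((polarFactor X)ᴴ * polarFactor X) := by
  have h : (polarFactor X)ᴴ * polarFactor X = gramFun X fun x => if x = 0 then 0 else 1 := by
    rw [show (polarFactor X)ᴴ * polarFactor X = (polarFactor X)ᴴ * X * gramFun X _ from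
      (Matrix.mul_assoc _ _ _).symm, conjTranspose_polarFactor_mul_self, gramFun_mul]
    refine gramFun_congr X fun x hx => ?_
    split_ifs with h0
    · simp [h0]
    · exact mul_inv_cancel₀ (Real.sqrt_ne_zero'.2 (hx.lt_of_ne' h0))
  rw [IsIdempotentElem, h, gramFun_mul]
  congr 1
  funext x
  split_ifs <;> norm_num

lemma polarFactor_mul_eq_zero {r : ℕ} {V : Matrix (Fin n₂) (Fin r) ℂ} (hXV : X * V = 0) :
    polarFactor X * V = 0 := by
  -- `(Xᴴ X)^{-1/2} = (Xᴴ X)^{-3/2} Xᴴ X`, and `X V = 0`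
  have h : gramFun X (fun x => (√x)⁻¹) = gramFun X (fun x => (√x)⁻¹ ^ 3) * (Xᴴ * X) := by
    rw [← gramFun_id, gramFun_mul]
    refine gramFun_congr X fun x hx => ?_
    rcases hx.eq_or_lt with rfl | hx
    · simp
    · have hs := (Real.sqrt_pos.2 hx).ne'
      rw [id, ← Real.sq_sqrt hx.le, Real.sqrt_sq (Real.sqrt_nonneg x)]
      field_simp
  rw [polarFactor, h, Matrix.mul_assoc, Matrix.mul_assoc, Matrix.mul_assoc, hXV]
  simp

end Polar

section TangentSpace
variable {n₁ n₂ r : ℕ} {U : Matrix (Fin n₁) (Fin r) ℂ} {V : Matrix (Fin n₂) (Fin r) ℂ}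

variable (U V) in
def normalSpace : Set (Matrix (Fin n₁) (Fin n₂) ℂ) := {C | Uᴴ * C = 0 ∧ C * V = 0}

variable (U V) in
lemma mul_mul_conjTranspose_mem_tangentSpace (D : Matrix (Fin r) (Fin r) ℂ) :
    U * D * Vᴴ ∈ tangentSpace U V :=
  ⟨0, U * D, by simp⟩

variable (U V) in
lemma projT_mem_tangentSpace (Z : Matrix (Fin n₁) (Fin n₂) ℂ) : projT U V Z ∈ tangentSpace U V := by
  refine ⟨Zᴴ * U, (Z - U * Uᴴ * Z) * V, ?_⟩
  simp only [projT, conjTranspose_mul, conjTranspose_conjTranspose, Matrix.sub_mul,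
    Matrix.mul_assoc]
  abel

lemma sub_projT_mem_normalSpace (hU : Uᴴ * U = 1) (hV : Vᴴ * V = 1)
    (Z : Matrix (Fin n₁) (Fin n₂) ℂ) : Z - projT U V Z ∈ normalSpace U V := by
  have hUU : ∀ K : Matrix (Fin r) (Fin n₂) ℂ, Uᴴ * (U * K) = K := fun K => by
    rw [← Matrix.mul_assoc, hU, Matrix.one_mul]
  have hVV : ∀ K : Matrix (Fin n₁) (Fin r) ℂ, K * Vᴴ * V = K := fun K => by
    rw [Matrix.mul_assoc, hV, Matrix.mul_one]
  constructor
  · simp only [projT, Matrix.mul_sub, Matrix.mul_add, Matrix.mul_assoc, hUU]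
    abel
  · simp only [projT, Matrix.sub_mul, Matrix.add_mul, ← Matrix.mul_assoc, hVV]
    abel

lemma trace_conjTranspose_mul_eq_zero_of_mem_tangentSpace_of_mem_normalSpace
    {T C : Matrix (Fin n₁) (Fin n₂) ℂ} (hT : T ∈ tangentSpace U V) (hC : C ∈ normalSpace U V) :
    trace (Tᴴ * C) = 0 := by
  obtain ⟨B₁, B₂, rfl⟩ := hT
  rw [conjTranspose_add, Matrix.add_mul, trace_add, conjTranspose_mul, conjTranspose_mul,
    conjTranspose_conjTranspose, conjTranspose_conjTranspose, Matrix.mul_assoc, hC.1,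
    Matrix.mul_zero, trace_mul_cycle, hC.2, Matrix.zero_mul]
  simp

lemma trace_conjTranspose_mul_eq_zero_of_mem_normalSpace_of_mem_tangentSpace
    {C T : Matrix (Fin n₁) (Fin n₂) ℂ} (hC : C ∈ normalSpace U V) (hT : T ∈ tangentSpace U V) :
    trace (Cᴴ * T) = 0 := by
  have h := congrArg star
    (trace_conjTranspose_mul_eq_zero_of_mem_tangentSpace_of_mem_normalSpace hT hC)
  rwa [← trace_conjTranspose, conjTranspose_mul, conjTranspose_conjTranspose, star_zero] at h

lemma polarFactor_mem_normalSpace {C : Matrix (Fin n₁) (Fin n₂) ℂ} (hC : C ∈ normalSpace U V) :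
    polarFactor C ∈ normalSpace U V :=
  ⟨by rw [polarFactor, ← Matrix.mul_assoc, hC.1, Matrix.zero_mul], polarFactor_mul_eq_zero C hC.2⟩

lemma trace_conjTranspose_mul_eq_of_decomposition {T₀ PH PY B CY : Matrix (Fin n₁) (Fin n₂) ℂ}
    (hT₀ : T₀ ∈ tangentSpace U V) (hPH : PH ∈ tangentSpace U V) (hPY : PY ∈ tangentSpace U V)
    (hB : B ∈ normalSpace U V) (hCY : CY ∈ normalSpace U V) :
    trace (T₀ᴴ * (PH + B)) =
      trace ((T₀ - PY)ᴴ * PH) + trace ((PY + CY)ᴴ * (PH + B)) - trace (CYᴴ * B) := by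
  have h₁ := trace_conjTranspose_mul_eq_zero_of_mem_tangentSpace_of_mem_normalSpace hT₀ hB
  have h₂ := trace_conjTranspose_mul_eq_zero_of_mem_tangentSpace_of_mem_normalSpace hPY hB
  have h₃ := trace_conjTranspose_mul_eq_zero_of_mem_normalSpace_of_mem_tangentSpace hCY hPH
  simp only [conjTranspose_add, conjTranspose_sub, Matrix.add_mul, Matrix.mul_add,
    Matrix.sub_mul, trace_add, trace_sub, h₁, h₂, h₃]
  ring

end TangentSpace

section Subgradient
variable {n₁ n₂ r : ℕ} {U : Matrix (Fin n₁) (Fin r) ℂ} {V : Matrix (Fin n₂) (Fin r) ℂ}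

lemma isIdempotentElem_conjTranspose_mul_self_mul_conjTranspose_add (hU : Uᴴ * U = 1)
    (hV : Vᴴ * V = 1) {P : Matrix (Fin n₁) (Fin n₂) ℂ} (hP : P ∈ normalSpace U V)
    (hPP : IsIdempotentElem (Pᴴ * P)) : IsIdempotentElem ((U * Vᴴ + P)ᴴ * (U * Vᴴ + P)) := by
  have hPU : Pᴴ * U = 0 := by
    rw [← conjTranspose_conjTranspose U, ← conjTranspose_mul, hP.1, conjTranspose_zero]
  have hVP : Vᴴ * Pᴴ = 0 := by rw [← conjTranspose_mul, hP.2, conjTranspose_zero]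
  have hG : (U * Vᴴ + P)ᴴ * (U * Vᴴ + P) = V * Vᴴ + Pᴴ * P := by
    simp only [conjTranspose_add, conjTranspose_mul, conjTranspose_conjTranspose, Matrix.add_mul,
      Matrix.mul_add, Matrix.mul_assoc]
    rw [← Matrix.mul_assoc Uᴴ U, hU, Matrix.one_mul, hP.1, ← Matrix.mul_assoc Pᴴ U, hPU]
    simp
  rw [IsIdempotentElem, hG]
  simp only [Matrix.add_mul, Matrix.mul_add, Matrix.mul_assoc]
  rw [← Matrix.mul_assoc Vᴴ V, hV, Matrix.one_mul, ← Matrix.mul_assoc Vᴴ Pᴴ, hVP,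
    ← Matrix.mul_assoc P V, hP.2, ← Matrix.mul_assoc Pᴴ P, hPP.eq]
  simp

lemma norm_trace_conjTranspose_mul_svd_le (hU : Uᴴ * U = 1) (hV : Vᴴ * V = 1) {d : Fin r → ℝ}
    (hd : ∀ i, 0 ≤ d i) {G : Matrix (Fin n₁) (Fin n₂) ℂ}
    (hG : ∀ v, l2norm (G *ᵥ v) ≤ l2norm v) :
    ‖trace (Gᴴ * (U * diagonal (fun i => (d i : ℂ)) * Vᴴ))‖ ≤ ∑ i, d i := by
  have htr : trace (Gᴴ * (U * diagonal (fun i => (d i : ℂ)) * Vᴴ)) =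
      ∑ i, (star (G *ᵥ fun k => V k i) ⬝ᵥ fun k => U k i) * d i := by
    rw [← Matrix.mul_assoc, trace_mul_cycle, ← conjTranspose_mul, trace]
    simp only [Matrix.diag, mul_diagonal, conjTranspose_mul_apply_self, col_mul_eq_mulVec,
      dotProduct, Finset.sum_mul, mul_assoc]
  rw [htr]
  refine (norm_sum_le _ _).trans (Finset.sum_le_sum fun i _ => ?_)
  rw [norm_mul, Complex.norm_real, Real.norm_of_nonneg (hd i)]
  refine mul_le_of_le_one_left (hd i) ((norm_star_dotProduct_le _ _).trans ?_)
  have hGV := hG fun k => V k i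
  rw [l2norm_col_of_conjTranspose_mul_self_eq_one hV] at hGV
  rw [l2norm_col_of_conjTranspose_mul_self_eq_one hU, mul_one]
  exact hGV

lemma nucNorm_svd_le (hU : Uᴴ * U = 1) (hV : Vᴴ * V = 1) {d : Fin r → ℝ} (hd : ∀ i, 0 ≤ d i) :
    nucNorm (U * diagonal (fun i => (d i : ℂ)) * Vᴴ) ≤ ∑ i, d i := by
  set M := U * diagonal (fun i => (d i : ℂ)) * Vᴴ
  have h := norm_trace_conjTranspose_mul_svd_le hU hV hd
    (l2norm_mulVec_le_of_isIdempotentElem (isIdempotentElem_conjTranspose_polarFactor_mul_self M))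
  rwa [trace_conjTranspose_polarFactor_mul_self, Complex.norm_real,
    Real.norm_of_nonneg (nucNorm_nonneg _)] at h

lemma trace_conjTranspose_mul_svd (hU : Uᴴ * U = 1) (hV : Vᴴ * V = 1) (d : Fin r → ℝ) :
    trace ((U * Vᴴ)ᴴ * (U * diagonal (fun i => (d i : ℂ)) * Vᴴ)) = ∑ i, (d i : ℂ) := by
  rw [conjTranspose_mul, conjTranspose_conjTranspose, Matrix.mul_assoc, ← Matrix.mul_assoc Uᴴ,
    ← Matrix.mul_assoc Uᴴ, hU, Matrix.one_mul, ← Matrix.mul_assoc, trace_mul_cycle, hV,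
    Matrix.one_mul, trace_diagonal]

theorem nucNorm_svd_add_ge (hU : Uᴴ * U = 1) (hV : Vᴴ * V = 1) {d : Fin r → ℝ}
    (hd : ∀ i, 0 ≤ d i) (H : Matrix (Fin n₁) (Fin n₂) ℂ) :
    nucNorm (U * diagonal (fun i => (d i : ℂ)) * Vᴴ) + (trace ((U * Vᴴ)ᴴ * H)).re
      + nucNorm (H - projT U V H) ≤ nucNorm (U * diagonal (fun i => (d i : ℂ)) * Vᴴ + H) := by
  set M := U * diagonal (fun i => (d i : ℂ)) * Vᴴ
  set B := H - projT U V H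
  have hB : B ∈ normalSpace U V := sub_projT_mem_normalSpace hU hV H
  have hP : polarFactor B ∈ normalSpace U V := polarFactor_mem_normalSpace hB
  -- the subgradient `U Vᴴ + polarFactor B` is a contraction: its two summands are partial
  -- isometries with orthogonal initial and final spaces
  have hG : ∀ v, l2norm ((U * Vᴴ + polarFactor B) *ᵥ v) ≤ 1 * l2norm v := fun v => by
    rw [one_mul]
    exact l2norm_mulVec_le_of_isIdempotentElem
      (isIdempotentElem_conjTranspose_mul_self_mul_conjTranspose_add hU hV hP
        (isIdempotentElem_conjTranspose_polarFactor_mul_self B)) v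
  have hPM : trace ((polarFactor B)ᴴ * M) = 0 :=
    trace_conjTranspose_mul_eq_zero_of_mem_normalSpace_of_mem_tangentSpace hP
      (mul_mul_conjTranspose_mem_tangentSpace U V _)
  have hPH : trace ((polarFactor B)ᴴ * H) = nucNorm B := by
    rw [show H = projT U V H + B from (add_sub_cancel _ _).symm, Matrix.mul_add, trace_add,
      trace_conjTranspose_mul_eq_zero_of_mem_normalSpace_of_mem_tangentSpace hP
        (projT_mem_tangentSpace U V H), zero_add, trace_conjTranspose_polarFactor_mul_self]
  have htr : (trace ((U * Vᴴ + polarFactor B)ᴴ * (M + H))).re =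
      ∑ i, d i + (trace ((U * Vᴴ)ᴴ * H)).re + nucNorm B := by
    rw [conjTranspose_add, Matrix.add_mul, Matrix.mul_add, Matrix.mul_add, trace_add, trace_add,
      trace_add, trace_conjTranspose_mul_svd hU hV, hPM, hPH, ← Complex.ofReal_sum]
    simp only [Complex.add_re, Complex.ofReal_re, Complex.zero_re]
    ring
  have h := (Complex.re_le_norm _).trans (norm_trace_conjTranspose_mul_le_mul_nucNorm hG (M + H))
  rw [htr, one_mul] at h
  linarith [nucNorm_svd_le hU hV hd]

theorem one_sub_singVals_mul_nucNorm_le (h : 0 < n₂) (hU : Uᴴ * U = 1) (hV : Vᴴ * V = 1)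
    {d : Fin r → ℝ} (hd : ∀ i, 0 ≤ d i) (Y H : Matrix (Fin n₁) (Fin n₂) ℂ) :
    (1 - singVals (Y - projT U V Y) ⟨0, h⟩) * nucNorm (H - projT U V H) ≤
      nucNorm (U * diagonal (fun i => (d i : ℂ)) * Vᴴ + H)
        - nucNorm (U * diagonal (fun i => (d i : ℂ)) * Vᴴ)
        + frobNorm (U * Vᴴ - projT U V Y) * frobNorm (projT U V H) + ‖trace (Yᴴ * H)‖ := by
  have hsub := nucNorm_svd_add_ge hU hV hd H
  have hdec := trace_conjTranspose_mul_eq_of_decomposition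
    (mul_mul_conjTranspose_mem_tangentSpace U V 1) (projT_mem_tangentSpace U V H)
    (projT_mem_tangentSpace U V Y) (sub_projT_mem_normalSpace hU hV H)
    (sub_projT_mem_normalSpace hU hV Y)
  rw [Matrix.mul_one, add_sub_cancel, add_sub_cancel] at hdec
  have h₁ := neg_le_of_abs_le ((Complex.abs_re_le_norm _).trans
    (norm_trace_conjTranspose_mul_le (U * Vᴴ - projT U V Y) (projT U V H)))
  have h₂ := neg_le_of_abs_le (Complex.abs_re_le_norm (trace (Yᴴ * H)))
  have h₃ := (Complex.re_le_norm _).trans (norm_trace_conjTranspose_mul_le_mul_nucNorm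
    (l2norm_mulVec_le_singVals_zero h (Y - projT U V Y)) (H - projT U V H))
  rw [hdec, Complex.sub_re, Complex.add_re] at hsub
  linarith

end Subgradient

lemma le_of_sharpness_bounds {h a b e γ κ α₁ α₂ δ ζ : ℝ} (hγ : 0 < γ) (hκ : 0 ≤ κ)
    (hα₁ : 0 ≤ α₁) (hΔ : α₁ * κ < (1 - α₂) * γ) (hh : h ≤ a + b) (ha : γ * a ≤ e + κ * b)
    (hb : (1 - α₂) * b ≤ δ + α₁ * a + ζ * e) :
    h ≤ (γ + κ) / ((1 - α₂) * γ - α₁ * κ) * (δ + ((α₁ + 1 - α₂) / (γ + κ) + ζ) * e) := by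
  set Δ := (1 - α₂) * γ - α₁ * κ
  have hΔ0 : 0 < Δ := by linarith
  have hγκ : 0 < γ + κ := by linarith
  have hb' : Δ * b ≤ γ * δ + (α₁ + γ * ζ) * e := by linear_combination γ * hb + α₁ * ha
  have key : γ * (Δ * h) ≤ γ * ((γ + κ) * δ + (α₁ + 1 - α₂ + (γ + κ) * ζ) * e) := by
    linear_combination (γ * Δ) * hh + Δ * ha + (γ + κ) * hb'
  rw [div_mul_eq_mul_div, le_div_iff₀ hΔ0, mul_comm h]
  have := le_of_mul_le_mul_left key hγ
  convert this using 1
  field_simp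

theorem stmt_13_general {n₁ n₂ r m : ℕ} (hn₂ : 0 < n₂)
    (A : Matrix (Fin n₁) (Fin n₂) ℂ →ₗ[ℂ] (Fin m → ℂ))
    (opA : ℝ)
    (hopA : opA = sSup {t : ℝ | ∃ Z : Matrix (Fin n₁) (Fin n₂) ℂ,
      frobNorm Z ≤ 1 ∧ t = l2norm (A Z)})
    (U : Matrix (Fin n₁) (Fin r) ℂ) (V : Matrix (Fin n₂) (Fin r) ℂ)
    (hU : Uᴴ * U = 1) (hV : Vᴴ * V = 1)
    (d : Fin r → ℝ) (hd : ∀ i, 0 < d i)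
    (M : Matrix (Fin n₁) (Fin n₂) ℂ)
    (hM : M = U * Matrix.diagonal (fun i => (d i : ℂ)) * Vᴴ)
    -- (i) A is bounded below on T_M with constant γ > 0
    (γ : ℝ) (hγ : 0 < γ)
    (hlow : ∀ Z ∈ tangentSpace U V, γ * frobNorm Z ≤ l2norm (A Z))
    -- (ii) an approximate dual certificate Y = A*z
    (z : Fin m → ℂ) (Y : Matrix (Fin n₁) (Fin n₂) ℂ)
    (hY : ∀ Z : Matrix (Fin n₁) (Fin n₂) ℂ,
      Matrix.trace (Yᴴ * Z) = ∑ j, (A Z) j * (starRingEnd ℂ) (z j))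
    (α₁ α₂ : ℝ)
    (hα₁ : α₁ = frobNorm (U * Vᴴ - projT U V Y))
    -- α₂ is the spectral norm (largest singular value) of P_{T^⊥} Y
    (hα₂ : α₂ = singVals (Y - projT U V Y) ⟨0, hn₂⟩)
    -- (iii)
    (hcert : α₁ * opA < (1 - α₂) * γ) :
    ∀ Mh : Matrix (Fin n₁) (Fin n₂) ℂ,
      frobNorm (Mh - M) ≤
        (γ + opA) / ((1 - α₂) * γ - α₁ * opA) *
          (nucNorm Mh - nucNorm M +
            ((α₁ + 1 - α₂) / (γ + opA) + l2norm z) * l2norm (A (Mh - M))) := by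
  intro Mh
  have hopA0 : 0 ≤ opA := hopA ▸ frobOpNorm_nonneg A
  have hA : ∀ Z, l2norm (A Z) ≤ opA * frobNorm Z := hopA ▸ l2norm_apply_le_frobOpNorm A
  set H := Mh - M
  have hsplit : frobNorm H ≤ frobNorm (projT U V H) + nucNorm (H - projT U V H) :=
    calc frobNorm H = frobNorm (projT U V H + (H - projT U V H)) := by rw [add_sub_cancel]
      _ ≤ _ := (frobNorm_add_le _ _).trans (add_le_add le_rfl (frobNorm_le_nucNorm _))
  have hlowH : γ * frobNorm (projT U V H) ≤ l2norm (A H) + opA * nucNorm (H - projT U V H) :=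
    calc γ * frobNorm (projT U V H) ≤ l2norm (A H - A (H - projT U V H)) := by
          rw [← map_sub, sub_sub_cancel]; exact hlow _ (projT_mem_tangentSpace U V H)
      _ ≤ l2norm (A H) + opA * frobNorm (H - projT U V H) :=
          (l2norm_sub_le _ _).trans (add_le_add le_rfl (hA _))
      _ ≤ _ := by gcongr; exact frobNorm_le_nucNorm _
  have hnuc : (1 - α₂) * nucNorm (H - projT U V H) ≤
      nucNorm Mh - nucNorm M + α₁ * frobNorm (projT U V H) + l2norm z * l2norm (A H) := by
    have hcY : ‖trace (Yᴴ * H)‖ ≤ l2norm z * l2norm (A H) := by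
      rw [hY, show ∑ j, A H j * (starRingEnd ℂ) (z j) = star z ⬝ᵥ A H by
        simp only [dotProduct, Pi.star_apply, RCLike.star_def, mul_comm]]
      exact norm_star_dotProduct_le _ _
    have h := one_sub_singVals_mul_nucNorm_le hn₂ hU hV (fun i => (hd i).le) Y H
    rw [← hM, add_sub_cancel, ← hα₁, ← hα₂] at h
    linarith
  exact le_of_sharpness_bounds hγ hopA0 (hα₁ ▸ Real.sqrt_nonneg _) hcert hsplit hlowH hnuc

theorem stmt_13 {n₁ n₂ r m : ℕ} (hn₂ : 0 < n₂)
    (A : Matrix (Fin n₁) (Fin n₂) ℂ →ₗ[ℂ] (Fin m → ℂ))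
    (opA : ℝ)
    (hopA : opA = sSup {t : ℝ | ∃ Z : Matrix (Fin n₁) (Fin n₂) ℂ,
      frobNorm Z ≤ 1 ∧ t = l2norm (A Z)})
    (U : Matrix (Fin n₁) (Fin r) ℂ) (V : Matrix (Fin n₂) (Fin r) ℂ)
    (hU : Uᴴ * U = 1) (hV : Vᴴ * V = 1)
    (d : Fin r → ℝ) (hd : ∀ i, 0 < d i)
    (M : Matrix (Fin n₁) (Fin n₂) ℂ)
    (hM : M = U * Matrix.diagonal (fun i => (d i : ℂ)) * Vᴴ)
    -- (i) A is bounded below on T_M with constant γ > 0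
    (γ : ℝ) (hγ : 0 < γ)
    (hlow : ∀ Z ∈ tangentSpace U V, γ * frobNorm Z ≤ l2norm (A Z))
    -- (ii) an approximate dual certificate Y = A*z
    (z : Fin m → ℂ) (Y : Matrix (Fin n₁) (Fin n₂) ℂ)
    (hY : ∀ Z : Matrix (Fin n₁) (Fin n₂) ℂ,
      Matrix.trace (Yᴴ * Z) = ∑ j, (A Z) j * (starRingEnd ℂ) (z j))
    (α₁ α₂ : ℝ)
    (hα₁ : α₁ = frobNorm (U * Vᴴ - projT U V Y))
    -- α₂ is the spectral norm (largest singular value) of P_{T^⊥} Y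
    (hα₂ : α₂ = singVals (Y - projT U V Y) ⟨0, hn₂⟩)
    (hα₂1 : α₂ < 1)
    -- (iii)
    (hcert : α₁ * opA < (1 - α₂) * γ) :
    ∀ Mh : Matrix (Fin n₁) (Fin n₂) ℂ,
      frobNorm (Mh - M) ≤
        (γ + opA) / ((1 - α₂) * γ - α₁ * opA) *
          (nucNorm Mh - nucNorm M +
            ((α₁ + 1 - α₂) / (γ + opA) + l2norm z) * l2norm (A (Mh - M))) :=
  stmt_13_general hn₂ A opA hopA U V hU hV d hd M hM γ hγ hlow z Y hY α₁ α₂ hα₁ hα₂ hcert
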